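/- Let (X,d) be a complete metric space and T : X → X satisfy ψ(d(Tx,Ty)) ≤ ψ(M(x,y)) − h(max{d(x,y), d(y,Ty)}) for all x, y ∈ X, where M(x,y) = max{d(x,y), d(x,Tx), d(y,Ty), (d(x,Ty)+d(y,Tx))/2}, ψ is an altering distance function, and h : [0,∞) → [0,∞) is continuous with h(t) = 0 iff t = 0. Then T has a unique fixed point. -/

import Mathlib

/-!
By the triangle inequality, `M(x, Tx) = max (d(x, Tx)) (d(Tx, T²x))`, so the condition at `(x, Tx)`
forces `d(Tx, T²x) ≤ d(x, Tx)`: otherwise it reads `ψ(b) ≤ ψ(b) - h(b)` with `b > 0`. Hence the step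
lengths of an orbit decrease to a limit `r`, and passing to the limit gives `ψ(r) ≤ ψ(r) - h(r)`, so
`r = 0`. If the orbit were not Cauchy, the usual crossing argument would give `mₖ ≥ k` with
`d(x_{mₖ}, xₖ) → ε > 0`; every distance in the condition at `(x_{mₖ}, xₖ)` then tends to `ε`, and the
same limit argument forces `ε = 0`. The limit of the orbit is fixed by the same argument at `(xₙ, z)`.
-/

open Filter Topology Set Function

lemma le_zero_of_tendsto_of_le_sub {ι : Type*} {l : Filter ι} [l.NeBot] {ψ h : ℝ → ℝ}
    (hψ : ContinuousOn ψ (Ici 0)) (hh : ContinuousOn h (Ici 0)) (hpos : ∀ t, 0 < t → 0 < h t)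
    {u v w : ι → ℝ} {L : ℝ} (hu : Tendsto u l (𝓝 L)) (hv : Tendsto v l (𝓝 L))
    (hw : Tendsto w l (𝓝 L)) (huvw : ∀ i, ψ (u i) ≤ ψ (v i) - h (w i)) : L ≤ 0 := by
  by_contra! hL
  have hψL := (hψ.continuousAt (Ici_mem_nhds hL)).tendsto
  have hhL := (hh.continuousAt (Ici_mem_nhds hL)).tendsto
  have : ψ L ≤ ψ L - h L :=
    le_of_tendsto_of_tendsto' (hψL.comp hu) ((hψL.comp hv).sub (hhL.comp hw)) huvw
  linarith [hpos L hL]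

section PseudoMetricSpace

variable {X : Type*} [PseudoMetricSpace X]

lemma tendsto_dist_of_tendsto_dist_zero {ι : Type*} {l : Filter ι} {y z y' z' : ι → X}
    {ε : ℝ} (hyz : Tendsto (fun i => dist (y i) (z i)) l (𝓝 ε))
    (hy : Tendsto (fun i => dist (y i) (y' i)) l (𝓝 0))
    (hz : Tendsto (fun i => dist (z i) (z' i)) l (𝓝 0)) :
    Tendsto (fun i => dist (y' i) (z' i)) l (𝓝 ε) := by
  rw [tendsto_iff_dist_tendsto_zero] at hyz ⊢
  refine squeeze_zero (fun _ => dist_nonneg) (fun i => ?_) (by simpa using (hy.add hz).add hyz)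
  calc dist (dist (y' i) (z' i)) ε
      ≤ dist (dist (y' i) (z' i)) (dist (y i) (z i)) + dist (dist (y i) (z i)) ε :=
        dist_triangle _ _ _
    _ ≤ dist (y' i) (y i) + dist (z' i) (z i) + dist (dist (y i) (z i)) ε := by
        gcongr; exact dist_dist_dist_le _ _ _ _
    _ = dist (y i) (y' i) + dist (z i) (z' i) + dist (dist (y i) (z i)) ε := by
        rw [dist_comm (y' i), dist_comm (z' i)]

lemma exists_dist_lt_le_dist_succ {x : ℕ → X} {ε : ℝ} (hε : 0 < ε) {p q : ℕ} (hpq : p ≤ q)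
    (hq : ε ≤ dist (x q) (x p)) :
    ∃ m, p ≤ m ∧ dist (x m) (x p) < ε ∧ ε ≤ dist (x (m + 1)) (x p) := by
  induction q, hpq using Nat.le_induction with
  | base => rw [dist_self] at hq; linarith
  | succ q hpq ih =>
    by_cases hlt : dist (x q) (x p) < ε
    · exact ⟨q, hpq, hlt, hq⟩
    · exact ih (not_lt.1 hlt)

lemma exists_tendsto_dist_of_not_cauchySeq {x : ℕ → X}
    (hx : Tendsto (fun n => dist (x n) (x (n + 1))) atTop (𝓝 0)) (hc : ¬CauchySeq x) :
    ∃ ε > 0, ∃ m : ℕ → ℕ, (∀ k, k ≤ m k) ∧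
      Tendsto (fun k => dist (x (m k)) (x k)) atTop (𝓝 ε) := by
  rw [Metric.cauchySeq_iff'] at hc
  push Not at hc
  obtain ⟨ε, hε, hfar⟩ := hc
  choose q hkq hq using hfar
  choose m hkm hlt hge using fun k => exists_dist_lt_le_dist_succ hε (hkq k) (hq k)
  refine ⟨ε, hε, fun k => m k + 1, fun k => (hkm k).trans (Nat.le_succ _), ?_⟩
  have hstep : Tendsto (fun k => dist (x (m k)) (x (m k + 1))) atTop (𝓝 0) :=
    hx.comp (tendsto_atTop_mono hkm tendsto_id)
  refine tendsto_of_tendsto_of_tendsto_of_le_of_le tendsto_const_nhds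
    (by simpa using tendsto_const_nhds.add hstep) hge fun k => ?_
  calc dist (x (m k + 1)) (x k) ≤ dist (x (m k)) (x (m k + 1)) + dist (x (m k)) (x k) :=
        dist_triangle_left _ _ _
    _ ≤ ε + dist (x (m k)) (x (m k + 1)) := by linarith [hlt k]

end PseudoMetricSpace

def IsAlteringContraction {X : Type*} [PseudoMetricSpace X] (ψ h : ℝ → ℝ) (T : X → X) :
    Prop :=
  ∀ x y : X, ψ (dist (T x) (T y)) ≤
    ψ (max (max (dist x y) (dist x (T x)))
        (max (dist y (T y)) ((dist x (T y) + dist y (T x)) / 2))) -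
      h (max (dist x y) (dist y (T y)))

namespace IsAlteringContraction

section PseudoMetricSpace

variable {X : Type*} [PseudoMetricSpace X] {ψ h : ℝ → ℝ} {T : X → X}

lemma dist_map_map_le (hT : IsAlteringContraction ψ h T) (hpos : ∀ t, 0 < t → 0 < h t)
    (x : X) :
    dist (T x) (T (T x)) ≤ dist x (T x) ∧
      ψ (dist (T x) (T (T x))) ≤ ψ (dist x (T x)) - h (dist x (T x)) := by
  have hxT := hT x (T x)
  set a := dist x (T x)
  set b := dist (T x) (T (T x))
  have hM : max (max a a) (max b ((dist x (T (T x)) + dist (T x) (T x)) / 2)) = max a b := by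
    have : dist x (T (T x)) ≤ a + b := dist_triangle _ _ _
    rw [dist_self, max_self, ← max_assoc]
    exact max_eq_left (by linarith [le_max_left a b, le_max_right a b])
  rw [hM] at hxT
  have hba : b ≤ a := by
    by_contra! hab
    rw [max_eq_right hab.le] at hxT
    linarith [hpos b (dist_nonneg.trans_lt hab)]
  rw [max_eq_left hba] at hxT
  exact ⟨hba, hxT⟩

variable {x : ℕ → X}

lemma tendsto_dist_orbit_succ (hT : IsAlteringContraction ψ h T)
    (hψ : ContinuousOn ψ (Ici 0)) (hh : ContinuousOn h (Ici 0)) (hpos : ∀ t, 0 < t → 0 < h t)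
    (hx : ∀ n, x (n + 1) = T (x n)) :
    Tendsto (fun n => dist (x n) (x (n + 1))) atTop (𝓝 0) := by
  set a := fun n => dist (x n) (x (n + 1))
  have hstep (n : ℕ) : a (n + 1) ≤ a n ∧ ψ (a (n + 1)) ≤ ψ (a n) - h (a n) := by
    simpa only [a, hx] using hT.dist_map_map_le hpos (x n)
  have hlim := tendsto_atTop_ciInf (antitone_nat_of_succ_le fun n => (hstep n).1)
    ⟨0, by rintro _ ⟨n, rfl⟩; exact dist_nonneg⟩
  have hr : ⨅ n, a n = 0 := le_antisymm
    (le_zero_of_tendsto_of_le_sub hψ hh hpos (hlim.comp (tendsto_add_atTop_nat 1)) hlim hlim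
      fun n => (hstep n).2)
    (le_ciInf fun _ => dist_nonneg)
  rwa [hr] at hlim

lemma cauchySeq_orbit (hT : IsAlteringContraction ψ h T)
    (hψ : ContinuousOn ψ (Ici 0)) (hh : ContinuousOn h (Ici 0)) (hpos : ∀ t, 0 < t → 0 < h t)
    (hx : ∀ n, x (n + 1) = T (x n)) : CauchySeq x := by
  have ha := tendsto_dist_orbit_succ hT hψ hh hpos hx
  by_contra hc
  obtain ⟨ε, hε, m, hkm, hd⟩ := exists_tendsto_dist_of_not_cauchySeq ha hc
  have ham : Tendsto (fun k => dist (x (m k)) (x (m k + 1))) atTop (𝓝 0) :=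
    ha.comp (tendsto_atTop_mono hkm tendsto_id)
  have hsucc := tendsto_dist_of_tendsto_dist_zero hd ham ha
  have hleft := tendsto_dist_of_tendsto_dist_zero (y' := fun k => x (m k)) hd (by simp) ha
  have hright := tendsto_dist_of_tendsto_dist_zero (z' := x) hd ham (by simp)
  have hM : Tendsto (fun k => max (max (dist (x (m k)) (x k)) (dist (x (m k)) (x (m k + 1))))
      (max (dist (x k) (x (k + 1)))
        ((dist (x (m k)) (x (k + 1)) + dist (x k) (x (m k + 1))) / 2))) atTop (𝓝 ε) := by
    have := (hd.max ham).max
      (ha.max ((hleft.add (hright.congr fun k => dist_comm _ _)).div_const 2))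
    rwa [max_eq_left hε.le, add_self_div_two, max_eq_right hε.le, max_self] at this
  have hw : Tendsto (fun k => max (dist (x (m k)) (x k)) (dist (x k) (x (k + 1)))) atTop
      (𝓝 ε) := by
    simpa [max_eq_left hε.le] using hd.max ha
  have := le_zero_of_tendsto_of_le_sub hψ hh hpos hsucc hM hw
    fun k => by simpa only [hx] using hT (x (m k)) (x k)
  linarith

end PseudoMetricSpace

section MetricSpace

variable {X : Type*} [MetricSpace X] {ψ h : ℝ → ℝ} {T : X → X}

lemma isFixedPt_of_tendsto_orbit (hT : IsAlteringContraction ψ h T)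
    (hψ : ContinuousOn ψ (Ici 0)) (hh : ContinuousOn h (Ici 0)) (hpos : ∀ t, 0 < t → 0 < h t)
    {x : ℕ → X} (hx : ∀ n, x (n + 1) = T (x n)) {z : X} (hz : Tendsto x atTop (𝓝 z)) :
    IsFixedPt T z := by
  have ha := tendsto_dist_orbit_succ hT hψ hh hpos hx
  have hxz : Tendsto (fun n => dist (x n) z) atTop (𝓝 0) := tendsto_iff_dist_tendsto_zero.1 hz
  have hxTz : Tendsto (fun n => dist (x n) (T z)) atTop (𝓝 (dist z (T z))) :=
    hz.dist tendsto_const_nhds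
  have hxTz_succ : Tendsto (fun n => dist (x (n + 1)) (T z)) atTop (𝓝 (dist z (T z))) :=
    (tendsto_add_atTop_iff_nat 1).2 hxTz
  have hzx : Tendsto (fun n => dist z (x (n + 1))) atTop (𝓝 0) := by
    simpa using (tendsto_const_nhds (x := z)).dist ((tendsto_add_atTop_iff_nat 1).2 hz)
  set D := dist z (T z)
  have hM : Tendsto (fun n => max (max (dist (x n) z) (dist (x n) (x (n + 1))))
      (max D ((dist (x n) (T z) + dist z (x (n + 1))) / 2))) atTop (𝓝 D) := by
    have := (hxz.max ha).max ((tendsto_const_nhds (x := D)).max ((hxTz.add hzx).div_const 2))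
    rwa [max_self, add_zero, max_eq_left (half_le_self dist_nonneg),
      max_eq_right dist_nonneg] at this
  have hw : Tendsto (fun n => max (dist (x n) z) D) atTop (𝓝 D) := by
    have := hxz.max (tendsto_const_nhds (x := D))
    rwa [max_eq_right dist_nonneg] at this
  have hD := le_zero_of_tendsto_of_le_sub hψ hh hpos hxTz_succ hM hw
    fun n => by simpa only [hx] using hT (x n) z
  exact (dist_le_zero.1 hD).symm

lemma eq_of_isFixedPt (hT : IsAlteringContraction ψ h T) (hpos : ∀ t, 0 < t → 0 < h t)
    {y z : X} (hy : IsFixedPt T y) (hz : IsFixedPt T z) : y = z := by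
  have hyz := hT y z
  rw [hy.eq, hz.eq, dist_self, dist_self, dist_comm z y, add_self_div_two, max_eq_left dist_nonneg,
    max_eq_right dist_nonneg, max_self] at hyz
  by_contra hne
  linarith [hpos _ (dist_pos.2 hne)]

end MetricSpace

end IsAlteringContraction

theorem stmt_8_general {X : Type*} [MetricSpace X] [CompleteSpace X] [Nonempty X]
    (ψ h : ℝ → ℝ)
    (hψc : ContinuousOn ψ (Set.Ici 0))
    (hhc : ContinuousOn h (Set.Ici 0))
    (hhnn : ∀ t, 0 ≤ t → 0 ≤ h t) (hh0 : ∀ t, 0 ≤ t → (h t = 0 ↔ t = 0))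
    (T : X → X)
    (hT : ∀ x y : X,
      ψ (dist (T x) (T y)) ≤
        ψ (max (max (dist x y) (dist x (T x)))
            (max (dist y (T y)) ((dist x (T y) + dist y (T x)) / 2))) -
        h (max (dist x y) (dist y (T y)))) :
    ∃! a : X, T a = a := by
  have hT : IsAlteringContraction ψ h T := hT
  have hpos : ∀ t, 0 < t → 0 < h t := fun t ht =>
    (hhnn t ht.le).lt_of_ne fun h0 => ht.ne' ((hh0 t ht.le).1 h0.symm)
  obtain ⟨x₀⟩ := ‹Nonempty X›
  have horbit (n : ℕ) : T^[n + 1] x₀ = T (T^[n] x₀) := iterate_succ_apply' T n x₀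
  obtain ⟨z, hz⟩ :=
    cauchySeq_tendsto_of_complete (hT.cauchySeq_orbit (x := (T^[·] x₀)) hψc hhc hpos horbit)
  have hTz : IsFixedPt T z := hT.isFixedPt_of_tendsto_orbit hψc hhc hpos horbit hz
  exact ⟨z, hTz, fun y hy => hT.eq_of_isFixedPt hpos hy hTz⟩

theorem stmt_8 {X : Type*} [MetricSpace X] [CompleteSpace X] [Nonempty X]
    (ψ h : ℝ → ℝ)
    (hψc : ContinuousOn ψ (Set.Ici 0)) (hψm : MonotoneOn ψ (Set.Ici 0))
    (hψnn : ∀ t, 0 ≤ t → 0 ≤ ψ t) (hψ0 : ∀ t, 0 ≤ t → (ψ t = 0 ↔ t = 0))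
    (hhc : ContinuousOn h (Set.Ici 0))
    (hhnn : ∀ t, 0 ≤ t → 0 ≤ h t) (hh0 : ∀ t, 0 ≤ t → (h t = 0 ↔ t = 0))
    (T : X → X)
    (hT : ∀ x y : X,
      ψ (dist (T x) (T y)) ≤
        ψ (max (max (dist x y) (dist x (T x)))
            (max (dist y (T y)) ((dist x (T y) + dist y (T x)) / 2))) -
        h (max (dist x y) (dist y (T y)))) :
    ∃! a : X, T a = a :=
  stmt_8_general ψ h hψc hhc hhnn hh0 T hT
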